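/- Let A be a finite set. Every irreducible sofic subshift X ⊆ A^ℤ is a W-subshift; in particular, every irreducible subshift of finite type X ⊆ A^ℤ is a W-subshift. -/

import Mathlib

/-- The shift action of `ℤ` on configurations `x : ℤ → A`: `(n • x)(m) = x(m - n)`. -/
def shiftZ {A : Type*} (n : ℤ) (x : ℤ → A) : ℤ → A :=
  fun m => x (m - n)

/-- A subshift is a closed, shift-invariant subset of `A^ℤ` (with the prodiscrete
topology). -/
def IsSubshiftZ {A : Type*} [TopologicalSpace A] (X : Set (ℤ → A)) : Prop :=
  IsClosed X ∧ ∀ (n : ℤ) (x : ℤ → A), x ∈ X → shiftZ n x ∈ X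

/-- A configuration is periodic if its orbit under the shift action is finite. -/
def IsPeriodicZ {A : Type*} (x : ℤ → A) : Prop :=
  (Set.range fun n : ℤ => shiftZ n x).Finite

/-- A subshift `X ⊆ A^ℤ` is strongly irreducible if there is a finite `Δ ⊆ ℤ` such
that whenever `Ω₁, Ω₂` are finite subsets of `ℤ` with `(Ω₁ - Δ) ∩ Ω₂ = ∅`, any two
configurations of `X` can be glued along `Ω₁` and `Ω₂` inside `X`. -/
def IsStronglyIrreducibleZ {A : Type*} (X : Set (ℤ → A)) : Prop :=
  ∃ Δ : Finset ℤ, ∀ Ω₁ Ω₂ : Finset ℤ,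
    (∀ a ∈ Ω₁, ∀ d ∈ Δ, a - d ∉ Ω₂) →
    ∀ x₁ ∈ X, ∀ x₂ ∈ X, ∃ x ∈ X,
      (∀ i ∈ Ω₁, x i = x₁ i) ∧ (∀ i ∈ Ω₂, x i = x₂ i)

/-- The word `w` appears as a subword of the configuration `x : ℤ → A`. -/
def AppearsIn {A : Type*} (w : List A) (x : ℤ → A) : Prop :=
  ∃ i : ℤ, ∀ k : Fin w.length, x (i + (k.1 : ℤ)) = w.get k

/-- The language of `X ⊆ A^ℤ`: all finite words appearing in configurations of `X`. -/
def lang {A : Type*} (X : Set (ℤ → A)) : Set (List A) :=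
  {w : List A | ∃ x ∈ X, AppearsIn w x}

/-- `X ⊆ A^ℤ` is irreducible if any two words of its language can be joined,
within the language, by some word. -/
def IrreducibleZ {A : Type*} (X : Set (ℤ → A)) : Prop :=
  ∀ u ∈ lang X, ∀ v ∈ lang X, ∃ w : List A, u ++ w ++ v ∈ lang X

/-- `X ⊆ A^ℤ` is a W-subshift if there is `n₀ ≥ 0` such that any two words of its
language can be joined, within the language, by a word of length at most `n₀`. -/
def IsWSubshift {A : Type*} (X : Set (ℤ → A)) : Prop :=
  ∃ n₀ : ℕ, ∀ u ∈ lang X, ∀ v ∈ lang X,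
    ∃ c ∈ lang X, c.length ≤ n₀ ∧ u ++ c ++ v ∈ lang X

/-- A subshift of `A^ℤ` is of finite type if it is defined by a finite window `Ω` and
a set of allowed patterns `P ⊆ A^Ω`. -/
def IsOfFiniteTypeZ {A : Type*} (X : Set (ℤ → A)) : Prop :=
  ∃ (Ω : Finset ℤ) (P : Set ({i : ℤ // i ∈ Ω} → A)),
    X = {x : ℤ → A | ∀ n : ℤ, (fun w : {i : ℤ // i ∈ Ω} => shiftZ n x w.1) ∈ P}

/-- A subshift `X ⊆ A^ℤ` is sofic if it is the image of a subshift of finite type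
`Y ⊆ B^ℤ` (over a finite alphabet `B`, with its prodiscrete topology) under a
surjective continuous shift-equivariant map. -/
def IsSoficZ {A : Type*} [TopologicalSpace A] (X : Set (ℤ → A)) : Prop :=
  ∃ (B : Type) (_ : Finite B) (Y : Set (ℤ → B)) (f : (ℤ → B) → (ℤ → A)),
    letI : TopologicalSpace B := ⊥
    IsSubshiftZ Y ∧ IsOfFiniteTypeZ Y ∧
      ContinuousOn f Y ∧ (∀ (n : ℤ), ∀ y ∈ Y, f (shiftZ n y) = shiftZ n (f y)) ∧
      f '' Y = X

/-- The periodic configuration `w^∞ ∈ A^ℤ` obtained by repeating a nonempty word `w`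
bi-infinitely. -/
def perConfig {A : Type*} (w : List A) (hw : w ≠ []) : ℤ → A := fun i =>
  w.get ⟨(i % (w.length : ℤ)).toNat, by
    have h0 : 0 < w.length := List.length_pos_iff.mpr hw
    have h1 : 0 ≤ i % (w.length : ℤ) :=
      Int.emod_nonneg _ (by exact_mod_cast h0.ne')
    have h2 : i % (w.length : ℤ) < (w.length : ℤ) :=
      Int.emod_lt_of_pos _ (by exact_mod_cast h0)
    omega⟩

/-!
Write `X = f(Y)` with `Y` of finite type and `f` a sliding block code of some radius `r`
(continuity on the compact set `Y` makes `f` local). Configurations of `Y` agreeing on a window of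
length `m` can be spliced, so whether `u ++ v` lies in `L(X)` depends only on which `Y`-blocks on
`[-r, m + r)` can sit under the seam at the right end of `u` and at the left end of `v`. These
classes are subsets of a finite set, so finitely many connecting words, one per realised pair of
classes, suffice.
-/

section

variable {A B : Type*}

def AppearsAt (w : List A) (x : ℤ → A) (i : ℤ) : Prop :=
  ∀ k : Fin w.length, x (i + k) = w.get k

theorem mem_lang_iff {X : Set (ℤ → A)} {w : List A} :
    w ∈ lang X ↔ ∃ x ∈ X, ∃ i, AppearsAt w x i :=
  Iff.rfl

theorem appearsAt_append {u v : List A} {x : ℤ → A} {i : ℤ} :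
    AppearsAt (u ++ v) x i ↔ AppearsAt u x i ∧ AppearsAt v x (i + u.length) := by
  simp only [AppearsAt, List.get_eq_getElem]
  have hlen : (u ++ v).length = u.length + v.length := List.length_append
  refine ⟨fun h => ⟨fun k => ?_, fun k => ?_⟩, fun ⟨hu, hv⟩ k => ?_⟩
  · rw [h ⟨k, by omega⟩, List.getElem_append_left]
  · have := h ⟨u.length + k, by omega⟩
    simp only [List.getElem_append_right (Nat.le_add_right _ _), Nat.add_sub_cancel_left] at this
    simpa [add_assoc] using this
  · by_cases hk : (k : ℕ) < u.length
    · rw [hu ⟨k, hk⟩, List.getElem_append_left]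
    · have := hv ⟨k - u.length, by omega⟩
      rw [List.getElem_append_right (by omega)]
      convert this using 2
      push_cast [Nat.cast_sub (not_lt.1 hk)]
      ring

theorem AppearsAt.shiftZ {w : List A} {x : ℤ → A} {i : ℤ} (h : AppearsAt w x i) (n : ℤ) :
    AppearsAt w (shiftZ n x) (i + n) := fun k => by
  simpa [_root_.shiftZ, add_sub_right_comm] using h k

theorem AppearsAt.congr {w : List A} {x x' : ℤ → A} {i : ℤ} (h : AppearsAt w x i)
    (hx : ∀ j, i ≤ j → j < i + w.length → x' j = x j) : AppearsAt w x' i := fun k =>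
  (hx _ (by omega) (by omega)).trans (h k)

theorem mem_lang_of_append_mem_lang {X : Set (ℤ → A)} {u w v : List A}
    (h : u ++ w ++ v ∈ lang X) : w ∈ lang X := by
  obtain ⟨x, hx, i, hi⟩ := mem_lang_iff.1 h
  exact mem_lang_iff.2 ⟨x, hx, _, (appearsAt_append.1 (appearsAt_append.1 hi).1).2⟩

theorem isWSubshift_of_append_mem_lang_iff {T : Type*} [Finite T] {X : Set (ℤ → A)}
    (R L : List A → Set T) (hRL : ∀ u v, u ++ v ∈ lang X ↔ (R u ∩ L v).Nonempty)
    (hirr : IrreducibleZ X) : IsWSubshift X := by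
  have hR : ∀ {u u'} v, R u = R u' → u ++ v ∈ lang X → u' ++ v ∈ lang X := fun v h huv => by
    rwa [hRL, ← h, ← hRL]
  have hL : ∀ {v v'} u, L v = L v' → u ++ v ∈ lang X → u ++ v' ∈ lang X := fun u h huv => by
    rwa [hRL, ← h, ← hRL]
  have hconnect : ∀ p : Set T × Set T, ∃ w : List A,
      ∀ u ∈ lang X, ∀ v ∈ lang X, (R u, L v) = p → u ++ w ++ v ∈ lang X := by
    rintro ⟨P, Q⟩
    by_cases hPQ : ∃ u₀ ∈ lang X, ∃ v₀ ∈ lang X, R u₀ = P ∧ L v₀ = Q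
    · obtain ⟨u₀, hu₀, v₀, hv₀, rfl, rfl⟩ := hPQ
      obtain ⟨w, hw⟩ := hirr u₀ hu₀ v₀ hv₀
      refine ⟨w, fun u _ v _ huv => ?_⟩
      obtain ⟨hu, hv⟩ := Prod.mk.inj huv
      rw [List.append_assoc] at hw
      have := hR (w ++ v₀) hu.symm hw
      rw [← List.append_assoc] at this
      exact hL (u ++ w) hv.symm this
    · exact ⟨[], fun u hu v hv huv => (hPQ ⟨u, hu, v, hv, Prod.mk.inj huv⟩).elim⟩
  choose w hw using hconnect
  obtain ⟨n₀, hn₀⟩ := (Set.finite_range fun p => (w p).length).bddAbove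
  exact ⟨n₀, fun u hu v hv => ⟨w (R u, L v), mem_lang_of_append_mem_lang (hw _ u hu v hv rfl),
    hn₀ ⟨_, rfl⟩, hw _ u hu v hv rfl⟩⟩

theorem IsCompact.exists_finset_eq_of_continuousOn {ι : Type*} [TopologicalSpace A]
    [DiscreteTopology A] [TopologicalSpace B] [DiscreteTopology B] {Y : Set (ι → B)}
    {g : (ι → B) → A} (hY : IsCompact Y) (hg : ContinuousOn g Y) :
    ∃ F : Finset ι, ∀ y ∈ Y, ∀ y' ∈ Y, (∀ j ∈ F, y j = y' j) → g y = g y' := by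
  classical
  have hlocal : ∀ y ∈ Y, ∃ F : Finset ι, ∀ z ∈ Y, (∀ j ∈ F, z j = y j) → g z = g y := by
    intro y hy
    obtain ⟨U, hU, hyU, hUg⟩ :=
      mem_nhdsWithin.1 (hg y hy ((isOpen_discrete {g y}).mem_nhds rfl))
    obtain ⟨F, s, hs, hFU⟩ := isOpen_pi_iff.1 hU y hyU
    exact ⟨F, fun z hz hzy => hUg ⟨hFU fun j hj => hzy j hj ▸ (hs j hj).2, hz⟩⟩
  choose! F hF using hlocal
  let cylinder (y : ι → B) : Set (ι → B) := (F y : Set ι).pi fun j => {y j}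
  obtain ⟨t, htY, hcover⟩ := hY.elim_nhds_subcover cylinder fun y _ =>
    set_pi_mem_nhds (F y).finite_toSet fun j _ => (isOpen_discrete _).mem_nhds rfl
  refine ⟨t.biUnion F, fun y hy y' hy' hyy' => ?_⟩
  obtain ⟨y₀, hy₀, hyy₀⟩ := Set.mem_iUnion₂.1 (hcover hy)
  have hy'y₀ : ∀ j ∈ F y₀, y' j = y₀ j := fun j hj =>
    (hyy' j (Finset.mem_biUnion.2 ⟨y₀, hy₀, hj⟩)).symm.trans (hyy₀ j hj)
  rw [hF y₀ (htY y₀ hy₀) y hy hyy₀, hF y₀ (htY y₀ hy₀) y' hy' hy'y₀]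

def IsBlockMapOn (Y : Set (ℤ → B)) (f : (ℤ → B) → (ℤ → A)) (r : ℕ) : Prop :=
  ∀ y ∈ Y, ∀ y' ∈ Y, ∀ n : ℤ, (∀ j, n - r ≤ j → j ≤ n + r → y j = y' j) → f y n = f y' n

theorem exists_isBlockMapOn [TopologicalSpace A] [DiscreteTopology A] [TopologicalSpace B]
    [DiscreteTopology B] {Y : Set (ℤ → B)} {f : (ℤ → B) → (ℤ → A)} (hY : IsCompact Y)
    (hinv : ∀ n : ℤ, ∀ y ∈ Y, shiftZ n y ∈ Y) (hf : ContinuousOn f Y)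
    (hequiv : ∀ n : ℤ, ∀ y ∈ Y, f (shiftZ n y) = shiftZ n (f y)) :
    ∃ r, IsBlockMapOn Y f r := by
  obtain ⟨F, hF⟩ :=
    hY.exists_finset_eq_of_continuousOn ((continuous_apply 0).comp_continuousOn hf)
  refine ⟨F.sup Int.natAbs, fun y hy y' hy' n hyy' => ?_⟩
  have hrecenter : ∀ z ∈ Y, f z n = f (shiftZ (-n) z) 0 := fun z hz => by
    rw [hequiv _ z hz]
    simp [shiftZ]
  rw [hrecenter y hy, hrecenter y' hy']
  refine hF _ (hinv _ y hy) _ (hinv _ y' hy') fun j hj => hyy' _ ?_ ?_ <;>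
  · have := Finset.le_sup (f := Int.natAbs) hj
    omega

def HasSplicingLength (Y : Set (ℤ → B)) (m : ℕ) : Prop :=
  ∀ y₁ ∈ Y, ∀ y₂ ∈ Y, ∀ a b : ℤ, a + m ≤ b → (∀ j, a ≤ j → j < b → y₁ j = y₂ j) →
    ∃ z ∈ Y, (∀ j < b, z j = y₁ j) ∧ ∀ j, a ≤ j → z j = y₂ j

theorem IsOfFiniteTypeZ.exists_hasSplicingLength {Y : Set (ℤ → B)} (hY : IsOfFiniteTypeZ Y) :
    ∃ m, HasSplicingLength Y m := by
  obtain ⟨Ω, P, rfl⟩ := hY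
  set N : ℕ := Ω.sup Int.natAbs
  have hΩ : ∀ i ∈ Ω, i.natAbs ≤ N := fun i hi => Finset.le_sup (f := Int.natAbs) hi
  refine ⟨2 * N + 1, fun y₁ hy₁ y₂ hy₂ a b hab hagree => ?_⟩
  set z : ℤ → B := fun j => if j < b then y₁ j else y₂ j
  have hz₂ : ∀ j, a ≤ j → z j = y₂ j := fun j hj => by
    simp only [z]
    split_ifs with h
    exacts [hagree j hj h, rfl]
  refine ⟨z, fun n => ?_, fun j hj => if_pos hj, hz₂⟩
  -- the window at `n` reads `z` on `Ω - n`, which lies to the right of `a` or to the left of `b`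
  by_cases hn : a ≤ -(N : ℤ) - n
  · convert hy₂ n using 2 with w
    exact hz₂ _ (by have := hΩ w.1 w.2; omega)
  · convert hy₁ n using 2 with w
    exact if_pos (by have := hΩ w.1 w.2; omega)

section Seams

variable {Y : Set (ℤ → B)} {f : (ℤ → B) → (ℤ → A)}

def seams (Y : Set (ℤ → B)) (f : (ℤ → B) → (ℤ → A)) (W : Finset ℤ) (w : List A) (i : ℤ) :
    Set (W → B) :=
  {t | ∃ y ∈ Y, AppearsAt w (f y) i ∧ ∀ j : W, y j = t j}

theorem seams_inter_nonempty_of_append_mem_lang {W : Finset ℤ}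
    (hinv : ∀ n : ℤ, ∀ y ∈ Y, shiftZ n y ∈ Y)
    (hequiv : ∀ n : ℤ, ∀ y ∈ Y, f (shiftZ n y) = shiftZ n (f y)) {u v : List A}
    (h : u ++ v ∈ lang (f '' Y)) :
    (seams Y f W u (-u.length) ∩ seams Y f W v 0).Nonempty := by
  obtain ⟨_, ⟨y, hy, rfl⟩, i, hi⟩ := mem_lang_iff.1 h
  set y' := shiftZ (-(i + u.length)) y
  have happ : AppearsAt (u ++ v) (f y') (-u.length) := by
    rw [hequiv _ y hy]
    convert hi.shiftZ (-(i + u.length)) using 1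
    ring
  rw [appearsAt_append, neg_add_cancel] at happ
  exact ⟨fun j => y' j, ⟨y', hinv _ y hy, happ.1, fun _ => rfl⟩,
    ⟨y', hinv _ y hy, happ.2, fun _ => rfl⟩⟩

theorem append_mem_lang_of_mem_seams {m r : ℕ} (hsplice : HasSplicingLength Y m)
    (hf : IsBlockMapOn Y f r) {u v : List A} {t : Finset.Ico (-(r : ℤ)) (m + r) → B}
    (hu : t ∈ seams Y f _ u (-u.length)) (hv : t ∈ seams Y f _ v 0) :
    u ++ v ∈ lang (f '' Y) := by
  obtain ⟨y₁, hy₁, hu, ht₁⟩ := hu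
  obtain ⟨y₂, hy₂, hv, ht₂⟩ := hv
  have hagree : ∀ j, -(r : ℤ) ≤ j → j < m + r → y₁ j = y₂ j := fun j hj₁ hj₂ => by
    have hj : j ∈ Finset.Ico (-(r : ℤ)) (m + r) := Finset.mem_Ico.2 ⟨hj₁, hj₂⟩
    exact (ht₁ ⟨j, hj⟩).trans (ht₂ ⟨j, hj⟩).symm
  obtain ⟨z, hz, hz₁, hz₂⟩ := hsplice y₁ hy₁ y₂ hy₂ _ _ (by omega) hagree
  refine mem_lang_iff.2 ⟨f z, ⟨z, hz, rfl⟩, -u.length, appearsAt_append.2 ⟨?_, ?_⟩⟩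
  · exact hu.congr fun j _ hj => hf z hz y₁ hy₁ j fun l _ hl => hz₁ l (by omega)
  · rw [neg_add_cancel]
    exact hv.congr fun j hj _ => hf z hz y₂ hy₂ j fun l hl _ => hz₂ l (by omega)

theorem isWSubshift_image [Finite B] {m r : ℕ} (hinv : ∀ n : ℤ, ∀ y ∈ Y, shiftZ n y ∈ Y)
    (hsplice : HasSplicingLength Y m) (hf : IsBlockMapOn Y f r)
    (hequiv : ∀ n : ℤ, ∀ y ∈ Y, f (shiftZ n y) = shiftZ n (f y))
    (hirr : IrreducibleZ (f '' Y)) : IsWSubshift (f '' Y) :=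
  isWSubshift_of_append_mem_lang_iff
    (fun u => seams Y f (Finset.Ico (-(r : ℤ)) (m + r)) u (-u.length)) (fun v => seams Y f _ v 0)
    (fun _ _ => ⟨seams_inter_nonempty_of_append_mem_lang hinv hequiv,
      fun ⟨_, hu, hv⟩ => append_mem_lang_of_mem_seams hsplice hf hu hv⟩) hirr

end Seams

end

/-- Every irreducible sofic subshift `X ⊆ A^ℤ` is a W-subshift; in particular, every
irreducible subshift of finite type `X ⊆ A^ℤ` is a W-subshift. -/
theorem irreducible_sofic_is_W
    {A : Type*} [Finite A] [TopologicalSpace A] [DiscreteTopology A] :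
    (∀ X : Set (ℤ → A), IsSubshiftZ X → IrreducibleZ X → IsSoficZ X →
      IsWSubshift X) ∧
    (∀ X : Set (ℤ → A), IsSubshiftZ X → IrreducibleZ X → IsOfFiniteTypeZ X →
      IsWSubshift X) := by
  constructor
  · intro X _ hirr hsofic
    obtain ⟨B, _, Y, f, hY, hYft, hcont, hequiv, rfl⟩ := hsofic
    let _ : TopologicalSpace B := ⊥
    have : DiscreteTopology B := ⟨rfl⟩
    obtain ⟨m, hm⟩ := hYft.exists_hasSplicingLength
    obtain ⟨r, hr⟩ := exists_isBlockMapOn hY.1.isCompact hY.2 hcont hequiv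
    exact isWSubshift_image hY.2 hm hr hequiv hirr
  · intro X hX hirr hXft
    obtain ⟨m, hm⟩ := hXft.exists_hasSplicingLength
    rw [← Set.image_id X] at hirr ⊢
    exact isWSubshift_image (r := 0) hX.2 hm (fun y _ y' _ n h => h n (by omega) (by omega))
      (fun _ _ _ => rfl) hirr
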